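/- Let R, R_0, R_1, …, R_{n-1} be i.i.d. ℕ-valued random variables. Then P(⋂_{k=0}^{n-1} ⋃_{i=0}^{k} {R_i ≥ k+1-i}) ≥ ∏_{k=0}^{n-1} (1 - ∏_{i=0}^{k} P(R < i+1)). -/

import Mathlib

/-!
The events `⋃_{i ≤ k} {R_i ≥ k + 1 - i}` are increasing in the vector `(R_i)`, whose law is the
product of the marginal laws, so the Harris (FKG) inequality bounds the probability of their
intersection below by the product of their probabilities; the complement of each event is a box
`⋂_{i ≤ k} {R_i ≤ k - i}`, whose probability factorises by independence. Harris's inequality on a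
product of linearly ordered factors follows by induction on the number of factors: the measures of
the sections of two upper sets are monotone in the split-off coordinate, so Chebyshev's integral
inequality for monotone functions applies.
-/

open MeasureTheory ProbabilityTheory

open scoped ENNReal

theorem ENNReal.mul_add_mul_le_mul_add_mul {a b c d : ℝ≥0∞} (hab : a ≤ b) (hcd : c ≤ d) :
    a * d + b * c ≤ a * c + b * d := by
  obtain ⟨e, rfl⟩ := exists_add_of_le hab
  obtain ⟨f, rfl⟩ := exists_add_of_le hcd
  calc a * (c + f) + (a + e) * c ≤ a * (c + f) + (a + e) * c + e * f := le_self_add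
    _ = a * c + (a + e) * (c + f) := by ring

theorem lintegral_mul_lintegral_le_lintegral_mul_of_monotone {α : Type*} [MeasurableSpace α]
    [LinearOrder α] (μ : Measure α) [IsProbabilityMeasure μ] {f g : α → ℝ≥0∞}
    (hfm : Measurable f) (hgm : Measurable g) (hf : Monotone f) (hg : Monotone g) :
    (∫⁻ x, f x ∂μ) * ∫⁻ x, g x ∂μ ≤ ∫⁻ x, f x * g x ∂μ := by
  have hfg : Measurable fun x ↦ f x * g x := hfm.mul hgm
  have hrearrange : ∀ x y, f x * g y + f y * g x ≤ f x * g x + f y * g y := by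
    intro x y
    rcases le_total x y with hxy | hyx
    · exact ENNReal.mul_add_mul_le_mul_add_mul (hf hxy) (hg hxy)
    · simpa only [add_comm] using ENNReal.mul_add_mul_le_mul_add_mul (hf hyx) (hg hyx)
  -- Integrate the rearrangement inequality over `μ ⊗ μ`.
  have hcross : ∫⁻ x, ∫⁻ y, f x * g y + f y * g x ∂μ ∂μ
      = 2 * ((∫⁻ x, f x ∂μ) * ∫⁻ x, g x ∂μ) := by
    simp_rw [lintegral_add_left (hgm.const_mul _), lintegral_const_mul _ hgm,
      lintegral_mul_const _ hfm, lintegral_add_left (hfm.mul_const _), lintegral_mul_const _ hfm,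
      lintegral_const_mul _ hgm]
    ring
  have hdiag : ∫⁻ x, ∫⁻ y, f x * g x + f y * g y ∂μ ∂μ = 2 * ∫⁻ x, f x * g x ∂μ := by
    simp_rw [lintegral_add_right _ hfg]
    simp only [lintegral_const, measure_univ, mul_one]
    rw [lintegral_add_left hfg]
    simp only [lintegral_const, measure_univ, mul_one]
    ring
  have htwice : 2 * ((∫⁻ x, f x ∂μ) * ∫⁻ x, g x ∂μ) ≤ 2 * ∫⁻ x, f x * g x ∂μ := by
    rw [← hcross, ← hdiag]
    exact lintegral_mono fun x ↦ lintegral_mono fun y ↦ hrearrange x y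
  exact (ENNReal.mul_le_mul_iff_right two_ne_zero ENNReal.ofNat_ne_top).1 htwice

section Harris

variable {α β γ : Type*} [MeasurableSpace α] [MeasurableSpace β] [MeasurableSpace γ]

def HarrisInequality [Preorder β] (ν : Measure β) : Prop :=
  ∀ ⦃A B : Set β⦄, MeasurableSet A → MeasurableSet B → IsUpperSet A → IsUpperSet B →
    ν A * ν B ≤ ν (A ∩ B)

theorem harrisInequality_dirac [Preorder β] (b : β) : HarrisInequality (Measure.dirac b) := by
  classical
  intro A B hA hB _ _
  simp only [Measure.dirac_apply' _ hA, Measure.dirac_apply' _ hB,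
    Measure.dirac_apply' _ (hA.inter hB), Set.indicator_apply, Set.mem_inter_iff, Pi.one_apply]
  split_ifs <;> simp_all

theorem HarrisInequality.map [Preorder β] [Preorder γ] {ν : Measure β} (h : HarrisInequality ν)
    {f : β → γ} (hfm : Measurable f) (hf : Monotone f) : HarrisInequality (ν.map f) := by
  intro A B hA hB hAu hBu
  rw [Measure.map_apply hfm hA, Measure.map_apply hfm hB, Measure.map_apply hfm (hA.inter hB)]
  exact h (hfm hA) (hfm hB) (hAu.preimage hf) (hBu.preimage hf)

theorem HarrisInequality.prod [LinearOrder α] [Preorder β] (μ : Measure α) [IsProbabilityMeasure μ]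
    {ν : Measure β} [SFinite ν] (h : HarrisInequality ν) : HarrisInequality (μ.prod ν) := by
  intro A B hA hB hAu hBu
  have hsection : ∀ {C : Set (α × β)}, MeasurableSet C → IsUpperSet C →
      Measurable (fun x ↦ ν (Prod.mk x ⁻¹' C)) ∧ Monotone (fun x ↦ ν (Prod.mk x ⁻¹' C)) :=
    fun hC hCu ↦ ⟨measurable_measure_prodMk_left hC,
      fun x x' hxx' ↦ measure_mono fun y ↦ hCu (show (x, y) ≤ (x', y) from ⟨hxx', le_rfl⟩)⟩
  have hup : ∀ {C : Set (α × β)}, IsUpperSet C → ∀ x, IsUpperSet (Prod.mk x ⁻¹' C) :=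
    fun hCu x ↦ hCu.preimage fun _ _ hyy' ↦ ⟨le_rfl, hyy'⟩
  rw [Measure.prod_apply hA, Measure.prod_apply hB, Measure.prod_apply (hA.inter hB)]
  calc (∫⁻ x, ν (Prod.mk x ⁻¹' A) ∂μ) * ∫⁻ x, ν (Prod.mk x ⁻¹' B) ∂μ
      ≤ ∫⁻ x, ν (Prod.mk x ⁻¹' A) * ν (Prod.mk x ⁻¹' B) ∂μ :=
        lintegral_mul_lintegral_le_lintegral_mul_of_monotone μ (hsection hA hAu).1
          (hsection hB hBu).1 (hsection hA hAu).2 (hsection hB hBu).2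
    _ ≤ ∫⁻ x, ν (Prod.mk x ⁻¹' (A ∩ B)) ∂μ := lintegral_mono fun x ↦
        h (measurable_prodMk_left hA) (measurable_prodMk_left hB) (hup hAu x) (hup hBu x)

theorem harrisInequality_pi [LinearOrder α] :
    ∀ {n : ℕ} (ν : Fin n → Measure α) [∀ i, IsProbabilityMeasure (ν i)],
      HarrisInequality (Measure.pi ν)
  | 0, ν, _ => by
    rw [Measure.pi_of_empty ν]
    exact harrisInequality_dirac _
  | n + 1, ν, _ => by
    let e := MeasurableEquiv.piFinSuccAbove (fun _ : Fin (n + 1) ↦ α) 0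
    have hcons : Monotone e.symm := by
      rintro ⟨x, y⟩ ⟨x', y'⟩ ⟨hx, hy⟩
      simpa [e, MeasurableEquiv.piFinSuccAbove_symm_apply, Fin.insertNthEquiv,
        Fin.insertNth_zero', Fin.cons_le_cons] using ⟨hx, hy⟩
    rw [← ((measurePreserving_piFinSuccAbove ν 0).symm e).map_eq]
    exact ((harrisInequality_pi _).prod (ν 0)).map e.symm.measurable hcons

theorem HarrisInequality.prod_le_measure_biInter [Preorder β] {ν : Measure β}
    [IsProbabilityMeasure ν] (h : HarrisInequality ν) {ι : Type*} (s : Finset ι)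
    {A : ι → Set β} (hA : ∀ i, MeasurableSet (A i)) (hAu : ∀ i, IsUpperSet (A i)) :
    ∏ i ∈ s, ν (A i) ≤ ν (⋂ i ∈ s, A i) := by
  classical
  induction s using Finset.induction_on with
  | empty => simp
  | insert a s ha ih =>
    rw [Finset.prod_insert ha, Finset.set_biInter_insert]
    exact (mul_le_mul_right ih _).trans <| h (hA a) (.biInter s.countable_toSet fun i _ ↦ hA i)
      (hAu a) (isUpperSet_iInter₂ fun i _ ↦ hAu i)

end Harris

theorem Fin.prod_Iic_sub_eq_prod_range {M : Type*} [CommMonoid M] {n : ℕ} (k : Fin n)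
    (g : ℕ → M) : ∏ i ∈ Finset.Iic k, g (k - i) = ∏ j ∈ Finset.range (k + 1), g j :=
  Finset.prod_nbij' (fun i ↦ k - i) (fun j ↦ ⟨k - j, by omega⟩)
    (fun i hi ↦ by simp only [Finset.mem_range]; omega)
    (fun j hj ↦ by simp [Fin.le_def])
    (fun i hi ↦ Fin.ext <| by have := Fin.le_def.1 (Finset.mem_Iic.1 hi); simp only; omega)
    (fun j hj ↦ by simp only [Finset.mem_range, Order.lt_add_one_iff] at hj ⊢; omega)
    (fun i _ ↦ rfl)

-- Vertex `k + 1` of the path is covered by the cone of some vertex `i ≤ k` of radius `x i`.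
def coveredAt {n : ℕ} (k : Fin n) : Set (Fin n → ℕ) :=
  {x | ∃ i ≤ k, (k : ℕ) + 1 - i ≤ x i}

theorem isUpperSet_coveredAt {n : ℕ} (k : Fin n) : IsUpperSet (coveredAt k) :=
  fun _ _ hxy ⟨i, hik, hi⟩ ↦ ⟨i, hik, hi.trans (hxy i)⟩

theorem measure_preimage_coveredAt {Ω : Type*} [MeasurableSpace Ω] (μ : Measure Ω)
    [IsProbabilityMeasure μ] {n : ℕ} {R : Fin n → Ω → ℕ} {R0 : Ω → ℕ}
    (hmeas : ∀ i, Measurable (R i)) (hmeas0 : Measurable R0)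
    (hident : ∀ i, Measure.map (R i) μ = Measure.map R0 μ) (hind : iIndepFun R μ) (k : Fin n) :
    μ ((fun ω i ↦ R i ω) ⁻¹' coveredAt k)
      = 1 - ∏ j ∈ Finset.range ((k : ℕ) + 1), μ {ω | R0 ω < j + 1} := by
  have hX : Measurable fun ω i ↦ R i ω := measurable_pi_lambda _ hmeas
  have hcompl : (fun ω i ↦ R i ω) ⁻¹' (coveredAt k)ᶜ
      = ⋂ i ∈ Finset.Iic k, R i ⁻¹' Set.Iio ((k - i : ℕ) + 1) := by
    ext ω
    simp only [coveredAt, Set.preimage_compl, Set.mem_compl_iff, Set.mem_preimage,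
      Set.mem_ofPred_eq, not_exists, not_and, not_le, Set.mem_iInter, Finset.mem_Iic,
      Set.mem_Iio]
    refine forall_congr' fun i ↦ forall_congr' fun hik ↦ ?_
    rw [Fin.le_def] at hik
    omega
  have hlaw : ∀ i s, μ (R i ⁻¹' s) = μ (R0 ⁻¹' s) := fun i s ↦ by
    rw [← Measure.map_apply (hmeas i) .of_discrete, hident, Measure.map_apply hmeas0 .of_discrete]
  rw [← compl_compl ((fun ω i ↦ R i ω) ⁻¹' coveredAt k), prob_compl_eq_one_sub
    (hX .of_discrete).compl, ← Set.preimage_compl, hcompl,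
    hind.measure_inter_preimage_eq_mul _ fun _ _ ↦ .of_discrete]
  simp_rw [hlaw]
  exact congrArg _ (Fin.prod_Iic_sub_eq_prod_range k fun j ↦ μ (R0 ⁻¹' Set.Iio (j + 1)))

/-- For i.i.d. ℕ-valued random variables `R 0, …, R (n-1)` with common distribution
that of `R0`, `P(⋂_{k<n} ⋃_{i≤k} {R i ≥ k+1-i}) ≥ ∏_{k<n} (1 - ∏_{i≤k} P(R0 < i+1))`. -/
theorem stmt8 {Ω : Type*} [MeasurableSpace Ω] (μ : Measure Ω) [IsProbabilityMeasure μ]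
    (n : ℕ) (R : Fin n → Ω → ℕ) (R0 : Ω → ℕ)
    (hmeas : ∀ i, Measurable (R i)) (hmeas0 : Measurable R0)
    (hident : ∀ i, Measure.map (R i) μ = Measure.map R0 μ)
    (hind : ProbabilityTheory.iIndepFun R μ) :
    ∏ k : Fin n, (1 - ∏ i ∈ Finset.range ((k : ℕ) + 1), μ {ω | R0 ω < i + 1})
      ≤ μ (⋂ k : Fin n, ⋃ i : Fin n, ⋃ (_ : i ≤ k),
            {ω | (k : ℕ) + 1 - (i : ℕ) ≤ R i ω}) := by
  have hX : Measurable fun ω i ↦ R i ω := measurable_pi_lambda _ hmeas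
  have : IsProbabilityMeasure (μ.map R0) := Measure.isProbabilityMeasure_map hmeas0.aemeasurable
  have hlaw : μ.map (fun ω i ↦ R i ω) = Measure.pi fun _ ↦ μ.map R0 :=
    (hind.map_fun_eq_pi_map fun i ↦ (hmeas i).aemeasurable).trans
      (congrArg Measure.pi (funext hident))
  calc ∏ k : Fin n, (1 - ∏ i ∈ Finset.range ((k : ℕ) + 1), μ {ω | R0 ω < i + 1})
      = ∏ k, (Measure.pi fun _ ↦ μ.map R0) (coveredAt k) := by
        rw [← hlaw]
        refine Finset.prod_congr rfl fun k _ ↦ ?_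
        rw [Measure.map_apply hX .of_discrete, measure_preimage_coveredAt μ hmeas hmeas0 hident hind]
    _ ≤ (Measure.pi fun _ ↦ μ.map R0) (⋂ k ∈ Finset.univ, coveredAt k) :=
        (harrisInequality_pi _).prod_le_measure_biInter _ (fun _ ↦ .of_discrete)
          isUpperSet_coveredAt
    _ = _ := by
        rw [← hlaw, Measure.map_apply hX .of_discrete]
        congr 1
        ext ω
        simp [coveredAt]
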